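/- A projectivity preserves harmonic conjugates: Let A and B be distinct points, let C be a point on the line AB, and let π be a projectivity from the range of AB to the range of a line m. Then π(h(A,B;C)) = h(π(A), π(B); π(C)). -/

import Mathlib

open Configuration

universe u
variable (P L : Type u) [Membership P L]

/-- Three points are collinear if some line passes through all three. -/
def Col (A B C : P) : Prop := ∃ l : L, A ∈ l ∧ B ∈ l ∧ C ∈ l

/-- Every line of `L` is incident with at least `n` distinct points. -/
def LinesHaveAtLeast (n : ℕ) : Prop :=
  ∀ l : L, ∃ s : Finset P, n ≤ s.card ∧ ∀ X ∈ s, X ∈ l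
/-- `IsTriangle A B C ab bc ca` : the points `A B C` form a triangle with sides
`ab = AB`, `bc = BC`, `ca = CA`; noncollinearity is expressed by each vertex
lying outside the opposite side. -/
def IsTriangle (A B C : P) (ab bc ca : L) : Prop :=
  A ∈ ab ∧ B ∈ ab ∧ B ∈ bc ∧ C ∈ bc ∧ C ∈ ca ∧ A ∈ ca ∧ A ∉ bc ∧ B ∉ ca ∧ C ∉ ab

/-- Two triangles are distinct if corresponding vertices are distinct and
corresponding sides are distinct. -/
def DistinctTriangles (A B C A' B' C' : P) (ab bc ca ab' bc' ca' : L) : Prop :=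
  A ≠ A' ∧ B ≠ B' ∧ C ≠ C' ∧ ab ≠ ab' ∧ bc ≠ bc' ∧ ca ≠ ca'

/-- Two triangles are perspective from the center `O` : the lines joining
corresponding vertices are concurrent at `O`, and `O` lies outside each of the
six sides. -/
def PerspectiveFromCenter (A B C A' B' C' : P) (ab bc ca ab' bc' ca' : L) (O : P) : Prop :=
  (∃ la : L, A ∈ la ∧ A' ∈ la ∧ O ∈ la) ∧
  (∃ lb : L, B ∈ lb ∧ B' ∈ lb ∧ O ∈ lb) ∧
  (∃ lc : L, C ∈ lc ∧ C' ∈ lc ∧ O ∈ lc) ∧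
  O ∉ ab ∧ O ∉ bc ∧ O ∉ ca ∧ O ∉ ab' ∧ O ∉ bc' ∧ O ∉ ca'

/-- Two triangles are perspective from the axis `l` : the intersection points of
corresponding sides lie on `l`, and `l` avoids each of the six vertices. -/
def PerspectiveFromAxis (A B C A' B' C' : P) (ab bc ca ab' bc' ca' : L) (l : L) : Prop :=
  (∃ X : P, X ∈ ab ∧ X ∈ ab' ∧ X ∈ l) ∧
  (∃ Y : P, Y ∈ bc ∧ Y ∈ bc' ∧ Y ∈ l) ∧
  (∃ Z : P, Z ∈ ca ∧ Z ∈ ca' ∧ Z ∈ l) ∧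
  A ∉ l ∧ B ∉ l ∧ C ∉ l ∧ A' ∉ l ∧ B' ∉ l ∧ C' ∉ l

/-- Desargues's property: two distinct triangles that are perspective from a
center are perspective from an axis. -/
def DesarguesProperty : Prop :=
  ∀ (A B C A' B' C' : P) (ab bc ca ab' bc' ca' : L) (O : P),
    IsTriangle P L A B C ab bc ca → IsTriangle P L A' B' C' ab' bc' ca' →
    DistinctTriangles P L A B C A' B' C' ab bc ca ab' bc' ca' →
    PerspectiveFromCenter P L A B C A' B' C' ab bc ca ab' bc' ca' O →
    ∃ l : L, PerspectiveFromAxis P L A B C A' B' C' ab bc ca ab' bc' ca' l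

/-- `D` is the harmonic conjugate `h(A,B;C)` of `C` with respect to the distinct
points `A`, `B` : choosing a line `l` through `C` with `l ≠ AB` and a point `R`
outside both `AB` and `l`, and setting `Pp = BR·l`, `Q = AR·l`, `S = AP·BQ`,
the point `D` is `AB·RS`.  (By the invariance theorem this is independent of
the choices of `l` and `R`.) -/
def IsHarmonic (A B C D : P) : Prop :=
  A ≠ B ∧ ∃ (ab l : L) (R Pp Q S : P),
    A ∈ ab ∧ B ∈ ab ∧ C ∈ ab ∧ C ∈ l ∧ l ≠ ab ∧ R ∉ ab ∧ R ∉ l ∧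
    Pp ∈ l ∧ Col P L B R Pp ∧ Q ∈ l ∧ Col P L A R Q ∧
    Col P L A Pp S ∧ Col P L B Q S ∧ D ∈ ab ∧ Col P L R S D

/-- The range of a line `l` : the points incident with `l`. -/
abbrev Rng (l : L) : Type _ := {X : P // X ∈ l}

/-- `f` is the perspectivity from the range of `l` to the range of `m` with
center `O`, a point outside both `l` and `m` : each point `X` of `l` is mapped
to the point `(OX)·m`, i.e. `O`, `X` and `f X` are collinear. -/
def IsPerspectivity (l m : L) (f : Rng P L l → Rng P L m) : Prop :=
  ∃ O : P, O ∉ l ∧ O ∉ m ∧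
    ∀ X : Rng P L l, ∃ k : L, O ∈ k ∧ (X : P) ∈ k ∧ ((f X : P)) ∈ k

/-- A projectivity between ranges of lines : a composite of finitely many
perspectivities. -/
inductive IsProjectivity : (l m : L) → (Rng P L l → Rng P L m) → Prop where
  | persp {l m : L} {f : Rng P L l → Rng P L m} :
      IsPerspectivity P L l m f → IsProjectivity l m f
  | comp {l m n : L} {f : Rng P L l → Rng P L m} {g : Rng P L m → Rng P L n} :
      IsProjectivity l m f → IsProjectivity m n g → IsProjectivity l n (g ∘ f)


/-!
A perspectivity with center `O` maps a harmonic quadruple `A B C D` to a harmonic one. By the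
invariance theorem the quadrangle of the construction may be taken with `R = O`; its four sides
`ab, l, AP, BQ` then form the dual configuration showing that the lines `OA, OB, OC, OD` are
harmonic in the dual plane, and the same argument in the dual plane, applied to this pencil and
the line `m`, shows that its section by `m` is harmonic. The dual plane has Desargues's property
because there it reads as the converse of Desargues's theorem, which follows from Desargues.

The invariance theorem compares two quadrangles for `A B C` through a third one in general
position with respect to both, which exists when lines have at least eight points; for two
quadrangles in general position, three applications of Desargues show that `RS` and `R'S'`
meet on `AB`. The degenerate cases `C = A` and `C = B` force `D = C` and are preserved since
perspectivities are injective.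
-/

section

variable {P L}

open HasLines HasPoints

section Incidence

namespace Configuration

variable {A B : P} {l m : L}

theorem mem_of_mem_of_eq (hA : A ∈ l) (h : l = m) : A ∈ m := h ▸ hA

theorem mem_of_eq_of_mem (h : A = B) (hB : B ∈ l) : A ∈ l := h ▸ hB

variable [Nondegenerate P L]

theorem line_unique (hAB : A ≠ B) (hAl : A ∈ l) (hBl : B ∈ l) (hAm : A ∈ m) (hBm : B ∈ m) :
    l = m :=
  (Nondegenerate.eq_or_eq hAl hBl hAm hBm).resolve_left hAB

theorem point_unique (hlm : l ≠ m) (hAl : A ∈ l) (hAm : A ∈ m) (hBl : B ∈ l) (hBm : B ∈ m) :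
    A = B :=
  (Nondegenerate.eq_or_eq hAl hBl hAm hBm).resolve_right hlm

end Configuration

namespace LinesHaveAtLeast

variable {n : ℕ}

theorem exists_mem_forall_notMem [Nondegenerate P L] (hn : LinesHaveAtLeast P L n) {g : L}
    {T : List L} (hT : ∀ t ∈ T, t ≠ g) (hlen : T.length < n) :
    ∃ X : P, X ∈ g ∧ ∀ t ∈ T, X ∉ t := by
  classical
  obtain ⟨s, hs, hsg⟩ := hn g
  have hcard : (T.toFinset.biUnion fun t => s.filter (· ∈ t)).card < s.card := by
    refine (Finset.card_biUnion_le_card_mul _ _ 1 fun t ht => ?_).trans_lt ?_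
    · refine Finset.card_le_one.mpr fun X hX Y hY => ?_
      rw [Finset.mem_filter] at hX hY
      exact point_unique (hT t (List.mem_toFinset.mp ht)) hX.2 (hsg X hX.1) hY.2 (hsg Y hY.1)
    · simpa using T.toFinset_card_le.trans_lt (hlen.trans_le hs)
  obtain ⟨X, hXs, hX⟩ := Finset.exists_mem_notMem_of_card_lt_card hcard
  exact ⟨X, hsg X hXs, fun t ht hXt =>
    hX (Finset.mem_biUnion.mpr ⟨t, List.mem_toFinset.mpr ht, Finset.mem_filter.mpr ⟨hXs, hXt⟩⟩)⟩

/-- Lines through `X` correspond to the points of a line avoiding `X`. -/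
theorem dual [HasLines P L] (hn : LinesHaveAtLeast P L n) :
    LinesHaveAtLeast (Dual L) (Dual P) n := by
  classical
  intro (X : P)
  obtain ⟨m, hXm⟩ := Nondegenerate.exists_line (L := L) X
  obtain ⟨s, hs, hsm⟩ := hn m
  have hne : ∀ Y ∈ s, X ≠ Y := fun Y hY h => hXm (h ▸ hsm Y hY)
  refine ⟨s.attach.image fun Y => (show Dual L from (mkLine (hne Y.1 Y.2) : L)), ?_, ?_⟩
  · rw [Finset.card_image_of_injective, Finset.card_attach]
    · exact hs
    · rintro ⟨Y, hY⟩ ⟨Z, hZ⟩ h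
      replace h : (mkLine (hne Y hY) : L) = mkLine (hne Z hZ) := h
      have hmk : (mkLine (hne Y hY) : L) ≠ m := fun h' => hXm (h' ▸ (mkLine_ax _).1)
      refine Subtype.ext (point_unique hmk (mkLine_ax _).2 (hsm Y hY) ?_ (hsm Z hZ))
      exact h ▸ (mkLine_ax (hne Z hZ)).2
  · intro g hg
    obtain ⟨Y, -, rfl⟩ := Finset.mem_image.mp hg
    exact (mkLine_ax _).1

theorem exists_line_forall_notMem [HasLines P L] (hn : LinesHaveAtLeast P L n) {X : P}
    {U : List P} (hU : ∀ Y ∈ U, Y ≠ X) (hlen : U.length < n) :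
    ∃ g : L, X ∈ g ∧ ∀ Y ∈ U, Y ∉ g :=
  hn.dual.exists_mem_forall_notMem (g := (X : Dual P)) hU hlen

end LinesHaveAtLeast

end Incidence

section Desargues

variable [Nondegenerate P L]

theorem PerspectiveFromCenter.side_ne {A A' O : P} {la ab ab' : L} (hla : A ∈ la ∧ A' ∈ la ∧ O ∈ la)
    (hAA' : A ≠ A') (hA : A ∈ ab) (hA' : A' ∈ ab') (hO : O ∉ ab) : ab ≠ ab' := by
  rintro rfl
  exact hO (line_unique hAA' hla.1 hla.2.1 hA hA' ▸ hla.2.2)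

namespace DesarguesProperty

theorem col (hdes : DesarguesProperty P L) {A B C A' B' C' O X Y Z : P} {ab bc ca ab' bc' ca' : L}
    (hT : IsTriangle P L A B C ab bc ca) (hT' : IsTriangle P L A' B' C' ab' bc' ca')
    (hAA' : A ≠ A') (hBB' : B ≠ B') (hCC' : C ≠ C')
    (hO : PerspectiveFromCenter P L A B C A' B' C' ab bc ca ab' bc' ca' O)
    (hX : X ∈ ab) (hX' : X ∈ ab') (hY : Y ∈ bc) (hY' : Y ∈ bc') (hZ : Z ∈ ca) (hZ' : Z ∈ ca') :
    Col P L X Y Z := by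
  obtain ⟨⟨la, hla⟩, ⟨lb, hlb⟩, ⟨lc, hlc⟩, hOab, hObc, hOca, -⟩ := id hO
  have hab := PerspectiveFromCenter.side_ne hla hAA' hT.1 hT'.1 hOab
  have hbc := PerspectiveFromCenter.side_ne hlb hBB' hT.2.2.1 hT'.2.2.1 hObc
  have hca := PerspectiveFromCenter.side_ne hlc hCC' hT.2.2.2.2.1 hT'.2.2.2.2.1 hOca
  obtain ⟨k, ⟨X₀, hX₀, hX₀', hX₀k⟩, ⟨Y₀, hY₀, hY₀', hY₀k⟩, ⟨Z₀, hZ₀, hZ₀', hZ₀k⟩, -⟩ :=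
    hdes A B C A' B' C' ab bc ca ab' bc' ca' O hT hT' ⟨hAA', hBB', hCC', hab, hbc, hca⟩ hO
  refine ⟨k, ?_, ?_, ?_⟩
  · exact point_unique hab hX₀ hX₀' hX hX' ▸ hX₀k
  · exact point_unique hbc hY₀ hY₀' hY hY' ▸ hY₀k
  · exact point_unique hca hZ₀ hZ₀' hZ hZ' ▸ hZ₀k

variable {A B C A' B' C' : P} {ab bc ca ab' bc' ca' l₀ : L}

/-- Desargues for the triangles `A A' Z` and `B B' Y`, perspective from `X`, where `X, Y, Z` are
the points of the axis on `ab, bc, ca`. -/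
theorem col_of_perspectiveFromAxis (hdes : DesarguesProperty P L)
    (hT : IsTriangle P L A B C ab bc ca) (hT' : IsTriangle P L A' B' C' ab' bc' ca')
    (hdist : DistinctTriangles P L A B C A' B' C' ab bc ca ab' bc' ca')
    (hax : PerspectiveFromAxis P L A B C A' B' C' ab bc ca ab' bc' ca' l₀)
    {O : P} {k₁ k₂ : L} (hAk₁ : A ∈ k₁) (hA'k₁ : A' ∈ k₁) (hBk₂ : B ∈ k₂) (hB'k₂ : B' ∈ k₂)
    (hOk₁ : O ∈ k₁) (hOk₂ : O ∈ k₂) : Col P L O C' C := by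
  obtain ⟨hAab, hBab, hBbc, hCbc, hCca, hAca, hAbc, hBca, -⟩ := hT
  obtain ⟨hA'ab', hB'ab', hB'bc', hC'bc', hC'ca', hA'ca', hA'bc', hB'ca', -⟩ := hT'
  obtain ⟨-, -, -, hab, hbc, hca⟩ := hdist
  obtain ⟨⟨X, hXab, hXab', hXl⟩, ⟨Y, hYbc, hYbc', hYl⟩, ⟨Z, hZca, hZca', hZl⟩,
    hAl, hBl, hCl, hA'l, hB'l, -⟩ := hax
  have off : ∀ {V W : P} {s t : L}, s ≠ t → V ∈ s → V ∈ t → W ∈ s → W ∈ t → W ∈ l₀ →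
      V ∉ l₀ → False :=
    fun hst hVs hVt hWs hWt hW hV => hV (point_unique hst hWs hWt hVs hVt ▸ hW)
  have hk₁ab : k₁ ≠ ab := fun h => off hab (h ▸ hA'k₁) hA'ab' hXab hXab' hXl hA'l
  have hk₁ca : k₁ ≠ ca := fun h => off hca (h ▸ hA'k₁) hA'ca' hZca hZca' hZl hA'l
  have hk₂ab : k₂ ≠ ab := fun h => off hab (h ▸ hB'k₂) hB'ab' hXab hXab' hXl hB'l
  have hk₂bc : k₂ ≠ bc := fun h => off hbc (h ▸ hB'k₂) hB'bc' hYbc hYbc' hYl hB'l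
  have hcabc : ca ≠ bc := fun h => hAbc (h ▸ hAca)
  have hcab : ca ≠ ab := fun h => hBca (h ▸ hBab)
  have hbcab : bc ≠ ab := fun h => hAbc (h ▸ hAab)
  have hca'ab' : ca' ≠ ab' := fun h => hB'ca' (h ▸ hB'ab')
  have hbc'ab' : bc' ≠ ab' := fun h => hA'bc' (h ▸ hA'ab')
  refine hdes.col (A' := B) (B' := B') (C' := Y) (bc' := bc') (ca' := bc)
    ⟨hAk₁, hA'k₁, hA'ca', hZca', hZca, hAca, fun h => off hca hAca h hZca hZca' hZl hAl,
      fun h => off hca h hA'ca' hZca hZca' hZl hA'l, fun h => off hk₁ca hAk₁ hAca h hZca hZl hAl⟩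
    ⟨hBk₂, hB'k₂, hB'bc', hYbc', hYbc, hBbc, fun h => off hbc hBbc h hYbc hYbc' hYl hBl,
      fun h => off hbc h hB'bc' hYbc hYbc' hYl hB'l, fun h => off hk₂bc hBk₂ hBbc h hYbc hYl hBl⟩
    (fun h => hAbc (h ▸ hBbc)) (fun h => hA'bc' (h ▸ hB'bc'))
    (fun h => off hcabc hCca hCbc hZca (h ▸ hYbc) hZl hCl)
    ⟨⟨ab, hAab, hBab, hXab⟩, ⟨ab', hA'ab', hB'ab', hXab'⟩, ⟨l₀, hZl, hYl, hXl⟩,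
      fun h => off hk₁ab hAk₁ hAab h hXab hXl hAl,
      fun h => off hca'ab' hA'ca' hA'ab' h hXab' hXl hA'l,
      fun h => off hcab hAca hAab h hXab hXl hAl,
      fun h => off hk₂ab hBk₂ hBab h hXab hXl hBl,
      fun h => off hbc'ab' hB'bc' hB'ab' h hXab' hXl hB'l,
      fun h => off hbcab hBbc hBab h hXab hXl hBl⟩
    hOk₁ hOk₂ hC'ca' hC'bc' hCca hCbc

end DesarguesProperty

theorem isTriangle_of_two_lines {C Pp Pp' X : P} {ab l l' p x x' : L} (hll' : l ≠ l')
    (hCl : C ∈ l) (hCl' : C ∈ l') (hCab : C ∈ ab) (hP : Pp ∈ l) (hP' : Pp' ∈ l')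
    (hPab : Pp ∉ ab) (hP'ab : Pp' ∉ ab) (hX : X ∈ ab) (hXC : X ≠ C)
    (hPp : Pp ∈ p) (hP'p : Pp' ∈ p) (hXx : X ∈ x) (hPx : Pp ∈ x) (hXx' : X ∈ x')
    (hP'x' : Pp' ∈ x') (hxx' : x ≠ x') :
    IsTriangle P L Pp Pp' X p x' x ∧ C ∉ p ∧ C ∉ x' ∧ C ∉ x := by
  have hXP : X ≠ Pp := fun h => hPab (h ▸ hX)
  have hXP' : X ≠ Pp' := fun h => hP'ab (h ▸ hX)
  have hP'x : Pp' ∉ x := fun h => hxx' (line_unique hXP' hXx h hXx' hP'x')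
  have hP'l : Pp' ∉ l := fun h => hP'ab (point_unique hll' h hP' hCl hCl' ▸ hCab)
  refine ⟨⟨hPp, hP'p, hP'x', hXx', hXx, hPx, fun h => hxx' (line_unique hXP hXx hPx hXx' h),
    hP'x, fun h => hP'x (line_unique hXP h hPp hXx hPx ▸ hP'p)⟩, fun h => ?_, fun h => ?_,
    fun h => ?_⟩
  · have hCP : C ≠ Pp := fun h' => hPab (h' ▸ hCab)
    exact hP'l (line_unique hCP h hPp hCl hP ▸ hP'p)
  · exact hP'ab (line_unique hXC.symm h hXx' hCab hX ▸ hP'x')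
  · exact hPab (line_unique hXC.symm h hXx hCab hX ▸ hPx)

/-- Desargues for the triangles `Pp Pp' X` and `Q Q' Y`, perspective from `C`. -/
theorem DesarguesProperty.col_of_two_lines (hdes : DesarguesProperty P L)
    {C Pp Q Pp' Q' X Y O Z Z' : P} {ab l l' p q x x' y y' : L} (hll' : l ≠ l')
    (hCl : C ∈ l) (hCl' : C ∈ l') (hCab : C ∈ ab) (hP : Pp ∈ l) (hQ : Q ∈ l) (hP' : Pp' ∈ l')
    (hQ' : Q' ∈ l') (hPQ : Pp ≠ Q) (hP'Q' : Pp' ≠ Q') (hPab : Pp ∉ ab) (hQab : Q ∉ ab)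
    (hP'ab : Pp' ∉ ab) (hQ'ab : Q' ∉ ab) (hX : X ∈ ab) (hY : Y ∈ ab) (hXY : X ≠ Y)
    (hXC : X ≠ C) (hYC : Y ≠ C) (hPp : Pp ∈ p) (hP'p : Pp' ∈ p) (hQq : Q ∈ q) (hQ'q : Q' ∈ q)
    (hOp : O ∈ p) (hOq : O ∈ q) (hXx : X ∈ x) (hPx : Pp ∈ x) (hXx' : X ∈ x') (hP'x' : Pp' ∈ x')
    (hxx' : x ≠ x') (hYy : Y ∈ y) (hQy : Q ∈ y) (hYy' : Y ∈ y') (hQ'y' : Q' ∈ y') (hyy' : y ≠ y')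
    (hZx : Z ∈ x) (hZy : Z ∈ y) (hZ'x' : Z' ∈ x') (hZ'y' : Z' ∈ y') : Col P L O Z Z' := by
  obtain ⟨hT, hCp, hCx', hCx⟩ := isTriangle_of_two_lines hll' hCl hCl' hCab hP hP' hPab hP'ab hX
    hXC hPp hP'p hXx hPx hXx' hP'x' hxx'
  obtain ⟨hT', hCq, hCy', hCy⟩ := isTriangle_of_two_lines hll' hCl hCl' hCab hQ hQ' hQab hQ'ab hY
    hYC hQq hQ'q hYy hQy hYy' hQ'y' hyy'
  obtain ⟨k, hOk, hZ'k, hZk⟩ := hdes.col hT hT' hPQ hP'Q' hXY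
    ⟨⟨l, hP, hQ, hCl⟩, ⟨l', hP', hQ', hCl'⟩, ⟨ab, hX, hY, hCab⟩, hCp, hCx', hCx, hCq, hCy', hCy⟩
    hOp hOq hZ'x' hZ'y' hZx hZy
  exact ⟨k, hOk, hZk, hZ'k⟩

end Desargues

section Converse

variable [ProjectivePlane P L]

namespace DesarguesProperty

variable {A B C A' B' C' : P} {ab bc ca ab' bc' ca' l₀ : L}

theorem converse (hdes : DesarguesProperty P L) (hT : IsTriangle P L A B C ab bc ca)
    (hT' : IsTriangle P L A' B' C' ab' bc' ca')
    (hdist : DistinctTriangles P L A B C A' B' C' ab bc ca ab' bc' ca')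
    (hax : PerspectiveFromAxis P L A B C A' B' C' ab bc ca ab' bc' ca' l₀) :
    ∃ O, PerspectiveFromCenter P L A B C A' B' C' ab bc ca ab' bc' ca' O := by
  obtain ⟨hAab, hBab, hBbc, -, -, hAca, hAbc, -, -⟩ := id hT
  obtain ⟨hA'ab', hB'ab', hB'bc', -, -, hA'ca', hA'bc', -, -⟩ := id hT'
  obtain ⟨hAA', hBB', -, hab, hbc, hca⟩ := id hdist
  obtain ⟨⟨X, hXab, hXab', hXl⟩, ⟨Y, hYbc, hYbc', hYl⟩, ⟨Z, hZca, hZca', hZl⟩,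
    hAl, hBl, -, hA'l, hB'l, -⟩ := id hax
  have off : ∀ {V W : P} {s t : L}, s ≠ t → V ∈ s → V ∈ t → W ∈ s → W ∈ t → W ∈ l₀ →
      V ∉ l₀ → False :=
    fun hst hVs hVt hWs hWt hW hV => hV (point_unique hst hWs hWt hVs hVt ▸ hW)
  have hAB : A ≠ B := fun h => hAbc (h ▸ hBbc)
  have hA'B' : A' ≠ B' := fun h => hA'bc' (h ▸ hB'bc')
  obtain ⟨k₁, hAk₁, hA'k₁⟩ : ∃ k₁ : L, A ∈ k₁ ∧ A' ∈ k₁ := ⟨_, mkLine_ax hAA'⟩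
  obtain ⟨k₂, hBk₂, hB'k₂⟩ : ∃ k₂ : L, B ∈ k₂ ∧ B' ∈ k₂ := ⟨_, mkLine_ax hBB'⟩
  have hk₁ab : k₁ ≠ ab := fun h => off hab (h ▸ hA'k₁) hA'ab' hXab hXab' hXl hA'l
  have hk₁ab' : k₁ ≠ ab' := fun h => off hab hAab (h ▸ hAk₁) hXab hXab' hXl hAl
  have hk₁ca : k₁ ≠ ca := fun h => off hca (h ▸ hA'k₁) hA'ca' hZca hZca' hZl hA'l
  have hk₁ca' : k₁ ≠ ca' := fun h => off hca hAca (h ▸ hAk₁) hZca hZca' hZl hAl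
  have hk₂ab : k₂ ≠ ab := fun h => off hab (h ▸ hB'k₂) hB'ab' hXab hXab' hXl hB'l
  have hk₂ab' : k₂ ≠ ab' := fun h => off hab hBab (h ▸ hBk₂) hXab hXab' hXl hBl
  have hk₂bc : k₂ ≠ bc := fun h => off hbc (h ▸ hB'k₂) hB'bc' hYbc hYbc' hYl hB'l
  have hk₂bc' : k₂ ≠ bc' := fun h => off hbc hBbc (h ▸ hBk₂) hYbc hYbc' hYl hBl
  have hk₁₂ : k₁ ≠ k₂ := fun h => hk₁ab (line_unique hAB hAk₁ (h ▸ hBk₂) hAab hBab)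
  obtain ⟨O, hOk₁, hOk₂⟩ : ∃ O : P, O ∈ k₁ ∧ O ∈ k₂ := ⟨_, mkPoint_ax hk₁₂⟩
  obtain ⟨k₃, hOk₃, hC'k₃, hCk₃⟩ :=
    hdes.col_of_perspectiveFromAxis hT hT' hdist hax hAk₁ hA'k₁ hBk₂ hB'k₂ hOk₁ hOk₂
  have hOA : O ≠ A := fun h => hAB (point_unique hk₂ab (h ▸ hOk₂) hAab hBk₂ hBab)
  have hOA' : O ≠ A' :=
    fun h => hA'B' (point_unique hk₂ab' (h ▸ hOk₂) hA'ab' hB'k₂ hB'ab')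
  have hOB : O ≠ B := fun h => hAB (point_unique hk₁ab hAk₁ hAab (h ▸ hOk₁) hBab)
  have hOB' : O ≠ B' :=
    fun h => hA'B' (point_unique hk₁ab' hA'k₁ hA'ab' (h ▸ hOk₁) hB'ab')
  exact ⟨O, ⟨k₁, hAk₁, hA'k₁, hOk₁⟩, ⟨k₂, hBk₂, hB'k₂, hOk₂⟩, ⟨k₃, hCk₃, hC'k₃, hOk₃⟩,
    fun h => hOA (point_unique hk₁ab hOk₁ h hAk₁ hAab),
    fun h => hOB (point_unique hk₂bc hOk₂ h hBk₂ hBbc),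
    fun h => hOA (point_unique hk₁ca hOk₁ h hAk₁ hAca),
    fun h => hOA' (point_unique hk₁ab' hOk₁ h hA'k₁ hA'ab'),
    fun h => hOB' (point_unique hk₂bc' hOk₂ h hB'k₂ hB'bc'),
    fun h => hOA' (point_unique hk₁ca' hOk₁ h hA'k₁ hA'ca')⟩

/-- In the dual plane Desargues's property is the converse of Desargues's theorem. -/
theorem dual (hdes : DesarguesProperty P L) :
    DesarguesProperty (Dual L) (Dual P) := by
  rintro a b c a' b' c' V₁ V₂ V₃ V₁' V₂' V₃' l₀ ⟨t₁, t₂, t₃, t₄, t₅, t₆, t₇, t₈, t₉⟩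
    ⟨t₁', t₂', t₃', t₄', t₅', t₆', t₇', t₈', t₉'⟩ ⟨d₁, d₂, d₃, d₄, d₅, d₆⟩
    ⟨pa, pb, pc, n₁, n₂, n₃, n₄, n₅, n₆⟩
  obtain ⟨O, k₁, k₂, k₃, o₁, o₂, o₃, o₄, o₅, o₆⟩ :=
    hdes.converse (P := P) (L := L) (A := (V₁ : P)) (ab := (b : L)) (bc := (c : L)) (ca := (a : L))
      ⟨t₂, t₃, t₄, t₅, t₆, t₁, t₉, t₇, t₈⟩ ⟨t₂', t₃', t₄', t₅', t₆', t₁', t₉', t₇', t₈'⟩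
      ⟨d₄, d₅, d₆, d₂, d₃, d₁⟩ ⟨pb, pc, pa, n₁, n₂, n₃, n₄, n₅, n₆⟩
  exact ⟨O, k₁, k₂, k₃, o₃, o₁, o₂, o₆, o₄, o₅⟩

end DesarguesProperty

end Converse

section Quadrangle

/-- A witness of `IsHarmonic P L A B C D` with `C ≠ A, B`, the base line `ab` fixed and the six
sides of the quadrangle `R Pp Q S` named. -/
structure HarmonicQuadrangle (A B C D : P) (ab : L) where
  A_ne_B : A ≠ B
  C_ne_A : C ≠ A
  C_ne_B : C ≠ B
  A_mem_ab : A ∈ ab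
  B_mem_ab : B ∈ ab
  C_mem_ab : C ∈ ab
  D_mem_ab : D ∈ ab
  l : L
  R : P
  Pp : P
  Q : P
  S : P
  BR : L
  AR : L
  AP : L
  BQ : L
  RS : L
  C_mem_l : C ∈ l
  l_ne_ab : l ≠ ab
  R_notMem_ab : R ∉ ab
  R_notMem_l : R ∉ l
  Pp_mem_l : Pp ∈ l
  Q_mem_l : Q ∈ l
  B_mem_BR : B ∈ BR
  R_mem_BR : R ∈ BR
  Pp_mem_BR : Pp ∈ BR
  A_mem_AR : A ∈ AR
  R_mem_AR : R ∈ AR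
  Q_mem_AR : Q ∈ AR
  A_mem_AP : A ∈ AP
  Pp_mem_AP : Pp ∈ AP
  S_mem_AP : S ∈ AP
  B_mem_BQ : B ∈ BQ
  Q_mem_BQ : Q ∈ BQ
  S_mem_BQ : S ∈ BQ
  R_mem_RS : R ∈ RS
  S_mem_RS : S ∈ RS
  D_mem_RS : D ∈ RS

namespace HarmonicQuadrangle

variable {A B C D : P} {ab : L}

theorem isHarmonic (K : HarmonicQuadrangle A B C D ab) : IsHarmonic P L A B C D :=
  ⟨K.A_ne_B, ab, K.l, K.R, K.Pp, K.Q, K.S, K.A_mem_ab, K.B_mem_ab, K.C_mem_ab, K.C_mem_l,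
    K.l_ne_ab, K.R_notMem_ab, K.R_notMem_l, K.Pp_mem_l,
    ⟨K.BR, K.B_mem_BR, K.R_mem_BR, K.Pp_mem_BR⟩, K.Q_mem_l,
    ⟨K.AR, K.A_mem_AR, K.R_mem_AR, K.Q_mem_AR⟩,
    ⟨K.AP, K.A_mem_AP, K.Pp_mem_AP, K.S_mem_AP⟩, ⟨K.BQ, K.B_mem_BQ, K.Q_mem_BQ, K.S_mem_BQ⟩,
    K.D_mem_ab, ⟨K.RS, K.R_mem_RS, K.S_mem_RS, K.D_mem_RS⟩⟩

variable (K : HarmonicQuadrangle A B C D ab)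

theorem R_ne_A : K.R ≠ A := fun h => K.R_notMem_ab (mem_of_eq_of_mem h K.A_mem_ab)

theorem R_ne_B : K.R ≠ B := fun h => K.R_notMem_ab (mem_of_eq_of_mem h K.B_mem_ab)

theorem BR_ne_l : K.BR ≠ K.l := fun h => K.R_notMem_l (mem_of_mem_of_eq K.R_mem_BR h)

theorem AR_ne_l : K.AR ≠ K.l := fun h => K.R_notMem_l (mem_of_mem_of_eq K.R_mem_AR h)

theorem RS_ne_ab : K.RS ≠ ab := fun h => K.R_notMem_ab (mem_of_mem_of_eq K.R_mem_RS h)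

theorem Q_ne_R : K.Q ≠ K.R := fun h => K.R_notMem_l (mem_of_eq_of_mem h.symm K.Q_mem_l)

variable [Nondegenerate P L]

theorem B_notMem_l : B ∉ K.l := fun h =>
  K.l_ne_ab (line_unique K.C_ne_B.symm h K.C_mem_l K.B_mem_ab K.C_mem_ab)

theorem A_notMem_BR : A ∉ K.BR := fun h =>
  K.R_notMem_ab <| mem_of_mem_of_eq K.R_mem_BR <|
    line_unique K.A_ne_B h K.B_mem_BR K.A_mem_ab K.B_mem_ab

theorem BR_ne_AR : K.BR ≠ K.AR := fun h => K.A_notMem_BR (mem_of_mem_of_eq K.A_mem_AR h.symm)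

theorem Pp_notMem_ab : K.Pp ∉ ab := fun h => by
  have hCBR : C ∈ K.BR :=
    mem_of_eq_of_mem (point_unique K.l_ne_ab K.C_mem_l K.C_mem_ab K.Pp_mem_l h) K.Pp_mem_BR
  exact K.R_notMem_ab (mem_of_mem_of_eq K.R_mem_BR
    (line_unique K.C_ne_B.symm K.B_mem_BR hCBR K.B_mem_ab K.C_mem_ab))

theorem Pp_ne_C : K.Pp ≠ C := fun h => K.Pp_notMem_ab (mem_of_eq_of_mem h K.C_mem_ab)

theorem Q_notMem_ab : K.Q ∉ ab := fun h => by
  have hCAR : C ∈ K.AR :=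
    mem_of_eq_of_mem (point_unique K.l_ne_ab K.C_mem_l K.C_mem_ab K.Q_mem_l h) K.Q_mem_AR
  exact K.R_notMem_ab (mem_of_mem_of_eq K.R_mem_AR
    (line_unique K.C_ne_A.symm K.A_mem_AR hCAR K.A_mem_ab K.C_mem_ab))

theorem Pp_ne_Q : K.Pp ≠ K.Q := fun h => K.R_notMem_l <| mem_of_eq_of_mem
  (point_unique K.BR_ne_AR K.R_mem_BR K.R_mem_AR K.Pp_mem_BR (mem_of_eq_of_mem h K.Q_mem_AR))
  K.Pp_mem_l

theorem R_notMem_AP : K.R ∉ K.AP := fun h => K.Pp_ne_Q <| point_unique K.AR_ne_l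
  (mem_of_mem_of_eq K.Pp_mem_AP (line_unique K.R_ne_A.symm K.A_mem_AP h K.A_mem_AR K.R_mem_AR))
  K.Pp_mem_l K.Q_mem_AR K.Q_mem_l

theorem R_notMem_BQ : K.R ∉ K.BQ := fun h => K.Pp_ne_Q <| point_unique K.BR_ne_l K.Pp_mem_BR
  K.Pp_mem_l
  (mem_of_mem_of_eq K.Q_mem_BQ (line_unique K.R_ne_B.symm K.B_mem_BQ h K.B_mem_BR K.R_mem_BR))
  K.Q_mem_l

theorem S_ne_R : K.S ≠ K.R := fun h => K.R_notMem_BQ (mem_of_eq_of_mem h.symm K.S_mem_BQ)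

theorem S_ne_Pp : K.S ≠ K.Pp :=
  fun h => K.B_notMem_l <| mem_of_mem_of_eq K.B_mem_BQ <|
    line_unique K.Pp_ne_Q (mem_of_eq_of_mem h.symm K.S_mem_BQ) K.Q_mem_BQ K.Pp_mem_l K.Q_mem_l

theorem AP_ne_ab : K.AP ≠ ab := fun h => K.Pp_notMem_ab (mem_of_mem_of_eq K.Pp_mem_AP h)

theorem BQ_ne_ab : K.BQ ≠ ab := fun h => K.Q_notMem_ab (mem_of_mem_of_eq K.Q_mem_BQ h)

theorem C_notMem_AP : C ∉ K.AP := fun h => K.AP_ne_ab <|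
  line_unique K.C_ne_A.symm K.A_mem_AP h K.A_mem_ab K.C_mem_ab

theorem S_notMem_ab : K.S ∉ ab := fun h => K.A_ne_B <|
  (point_unique K.AP_ne_ab K.S_mem_AP h K.A_mem_AP K.A_mem_ab).symm.trans
    (point_unique K.BQ_ne_ab K.S_mem_BQ h K.B_mem_BQ K.B_mem_ab)

theorem S_ne_A : K.S ≠ A := fun h => K.S_notMem_ab (mem_of_eq_of_mem h K.A_mem_ab)

theorem S_notMem_AR : K.S ∉ K.AR := fun h => K.R_notMem_AP <| mem_of_mem_of_eq K.R_mem_AR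
  (line_unique K.S_ne_A.symm K.A_mem_AP K.S_mem_AP K.A_mem_AR h).symm

theorem Q_notMem_RS : K.Q ∉ K.RS := fun h => K.S_notMem_AR <| mem_of_mem_of_eq K.S_mem_RS
  (line_unique K.Q_ne_R.symm K.R_mem_RS h K.R_mem_AR K.Q_mem_AR)

theorem isTriangle : IsTriangle P L K.R K.Q K.S K.AR K.BQ K.RS :=
  ⟨K.R_mem_AR, K.Q_mem_AR, K.Q_mem_BQ, K.S_mem_BQ, K.S_mem_RS, K.R_mem_RS, K.R_notMem_BQ,
    K.Q_notMem_RS, K.S_notMem_AR⟩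

end HarmonicQuadrangle

variable [Nondegenerate P L]

theorem IsHarmonic.nonempty_harmonicQuadrangle {A B C D : P} {ab : L} (h : IsHarmonic P L A B C D)
    (hCA : C ≠ A) (hCB : C ≠ B) (hA : A ∈ ab) (hB : B ∈ ab) :
    Nonempty (HarmonicQuadrangle A B C D ab) := by
  obtain ⟨hAB, ab₀, l, R, Pp, Q, S, hA₀, hB₀, hC, hCl, hlab, hRab, hRl, hPl, ⟨BR, h₁, h₂, h₃⟩, hQl,
    ⟨AR, h₄, h₅, h₆⟩, ⟨AP, h₇, h₈, h₉⟩, ⟨BQ, h₁₀, h₁₁, h₁₂⟩, hD, ⟨RS, h₁₃, h₁₄, h₁₅⟩⟩ := h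
  obtain rfl := line_unique hAB hA₀ hB₀ hA hB
  exact ⟨⟨hAB, hCA, hCB, hA, hB, hC, hD, l, R, Pp, Q, S, BR, AR, AP, BQ, RS, hCl, hlab, hRab, hRl,
    hPl, hQl, h₁, h₂, h₃, h₄, h₅, h₆, h₇, h₈, h₉, h₁₀, h₁₁, h₁₂, h₁₃, h₁₄, h₁₅⟩⟩

end Quadrangle

section Construction

variable [ProjectivePlane P L]

theorem HarmonicQuadrangle.exists_of_l_R {A B C : P} {ab l : L} (hAB : A ≠ B) (hCA : C ≠ A)
    (hCB : C ≠ B) (hA : A ∈ ab) (hB : B ∈ ab) (hC : C ∈ ab) (hCl : C ∈ l) (hlab : l ≠ ab)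
    {R : P} (hRab : R ∉ ab) (hRl : R ∉ l) :
    ∃ (D : P) (K : HarmonicQuadrangle A B C D ab), K.l = l ∧ K.R = R := by
  have hBR : B ≠ R := fun h => hRab (h ▸ hB)
  have hAR : A ≠ R := fun h => hRab (h ▸ hA)
  obtain ⟨BR, hB₁, hR₁⟩ : ∃ BR : L, B ∈ BR ∧ R ∈ BR := ⟨_, mkLine_ax hBR⟩
  obtain ⟨AR, hA₂, hR₂⟩ : ∃ AR : L, A ∈ AR ∧ R ∈ AR := ⟨_, mkLine_ax hAR⟩
  have hBRl : BR ≠ l := fun h => hRl (h ▸ hR₁)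
  have hARl : AR ≠ l := fun h => hRl (h ▸ hR₂)
  obtain ⟨Pp, hP₁, hPl⟩ : ∃ Pp : P, Pp ∈ BR ∧ Pp ∈ l := ⟨_, mkPoint_ax hBRl⟩
  obtain ⟨Q, hQ₂, hQl⟩ : ∃ Q : P, Q ∈ AR ∧ Q ∈ l := ⟨_, mkPoint_ax hARl⟩
  have hPab : Pp ∉ ab := fun h => hRab <| line_unique hCB.symm hB₁
    (point_unique hlab hCl hC hPl h ▸ hP₁) hB hC ▸ hR₁
  have hAP : A ≠ Pp := fun h => hRab (line_unique hAB (h ▸ hP₁) hB₁ hA hB ▸ hR₁)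
  have hBQ : B ≠ Q := fun h => hRab (line_unique hAB hA₂ (h ▸ hQ₂) hA hB ▸ hR₂)
  obtain ⟨AP, hA₃, hP₃⟩ : ∃ AP : L, A ∈ AP ∧ Pp ∈ AP := ⟨_, mkLine_ax hAP⟩
  obtain ⟨BQ, hB₄, hQ₄⟩ : ∃ BQ : L, B ∈ BQ ∧ Q ∈ BQ := ⟨_, mkLine_ax hBQ⟩
  have hAPBQ : AP ≠ BQ := fun h => hPab (line_unique hAB hA₃ (h ▸ hB₄) hA hB ▸ hP₃)
  obtain ⟨S, hS₃, hS₄⟩ : ∃ S : P, S ∈ AP ∧ S ∈ BQ := ⟨_, mkPoint_ax hAPBQ⟩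
  have hBRAR : BR ≠ AR := fun h => hRab (line_unique hAB (h ▸ hA₂) hB₁ hA hB ▸ hR₁)
  have hRS : R ≠ S := fun h => by
    have hQBR : Q ∈ BR := line_unique hBR hB₄ (h ▸ hS₄) hB₁ hR₁ ▸ hQ₄
    have hQP : Q = Pp := point_unique hBRl hQBR hQl hP₁ hPl
    exact hRl (point_unique hBRAR hR₁ hR₂ hP₁ (hQP ▸ hQ₂) ▸ hPl)
  obtain ⟨RS, hR₅, hS₅⟩ : ∃ RS : L, R ∈ RS ∧ S ∈ RS := ⟨_, mkLine_ax hRS⟩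
  have hRSab : RS ≠ ab := fun h => hRab (h ▸ hR₅)
  obtain ⟨hD₅, hD⟩ := mkPoint_ax (P := P) hRSab
  exact ⟨_, ⟨hAB, hCA, hCB, hA, hB, hC, hD, l, R, Pp, Q, S, BR, AR, AP, BQ, RS, hCl, hlab, hRab,
    hRl, hPl, hQl, hB₁, hR₁, hP₁, hA₂, hR₂, hQ₂, hA₃, hP₃, hS₃, hB₄, hQ₄, hS₄, hR₅, hS₅, hD₅⟩,
    rfl, rfl⟩

end Construction

section Invariance

namespace HarmonicQuadrangle

variable {A B C D D' : P} {ab : L}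

structure Generic (K : HarmonicQuadrangle A B C D ab) (N : HarmonicQuadrangle A B C D' ab) :
    Prop where
  l_ne : K.l ≠ N.l
  BR_ne : K.BR ≠ N.BR
  AR_ne : K.AR ≠ N.AR
  AP_ne : K.AP ≠ N.AP
  BQ_ne : K.BQ ≠ N.BQ

namespace Generic

variable {K : HarmonicQuadrangle A B C D ab} {N : HarmonicQuadrangle A B C D' ab}

theorem symm (h : K.Generic N) : N.Generic K :=
  ⟨h.l_ne.symm, h.BR_ne.symm, h.AR_ne.symm, h.AP_ne.symm, h.BQ_ne.symm⟩

theorem of_notMem (hl : K.l ≠ N.l) (hBR : N.Pp ∉ K.BR) (hAR : N.Q ∉ K.AR) (hAP : N.Pp ∉ K.AP)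
    (hBQ : N.Q ∉ K.BQ) : K.Generic N :=
  ⟨hl, fun e => hBR (mem_of_mem_of_eq N.Pp_mem_BR e.symm),
    fun e => hAR (mem_of_mem_of_eq N.Q_mem_AR e.symm),
    fun e => hAP (mem_of_mem_of_eq N.Pp_mem_AP e.symm),
    fun e => hBQ (mem_of_mem_of_eq N.Q_mem_BQ e.symm)⟩

variable [Nondegenerate P L]

theorem Pp_notMem_l (h : K.Generic N) : N.Pp ∉ K.l := fun e => N.Pp_notMem_ab <|
  mem_of_eq_of_mem (point_unique h.l_ne e N.Pp_mem_l K.C_mem_l N.C_mem_l) K.C_mem_ab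

theorem Q_notMem_l (h : K.Generic N) : N.Q ∉ K.l := fun e => N.Q_notMem_ab <|
  mem_of_eq_of_mem (point_unique h.l_ne e N.Q_mem_l K.C_mem_l N.C_mem_l) K.C_mem_ab

theorem Pp_notMem_BR (h : K.Generic N) : N.Pp ∉ K.BR := fun e => N.Pp_notMem_ab <|
  mem_of_eq_of_mem (point_unique h.BR_ne e N.Pp_mem_BR K.B_mem_BR N.B_mem_BR) K.B_mem_ab

theorem Q_notMem_AR (h : K.Generic N) : N.Q ∉ K.AR := fun e => N.Q_notMem_ab <|
  mem_of_eq_of_mem (point_unique h.AR_ne e N.Q_mem_AR K.A_mem_AR N.A_mem_AR) K.A_mem_ab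

theorem Pp_notMem_AP (h : K.Generic N) : N.Pp ∉ K.AP := fun e => N.Pp_notMem_ab <|
  mem_of_eq_of_mem (point_unique h.AP_ne e N.Pp_mem_AP K.A_mem_AP N.A_mem_AP) K.A_mem_ab

theorem Q_notMem_BQ (h : K.Generic N) : N.Q ∉ K.BQ := fun e => N.Q_notMem_ab <|
  mem_of_eq_of_mem (point_unique h.BQ_ne e N.Q_mem_BQ K.B_mem_BQ N.B_mem_BQ) K.B_mem_ab

theorem col_R (hdes : DesarguesProperty P L) (h : K.Generic N) {O : P} {p q : L}
    (hPp : K.Pp ∈ p) (hP'p : N.Pp ∈ p) (hQq : K.Q ∈ q) (hQ'q : N.Q ∈ q) (hOp : O ∈ p)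
    (hOq : O ∈ q) : Col P L O K.R N.R :=
  hdes.col_of_two_lines h.l_ne K.C_mem_l N.C_mem_l K.C_mem_ab K.Pp_mem_l K.Q_mem_l N.Pp_mem_l
    N.Q_mem_l K.Pp_ne_Q N.Pp_ne_Q K.Pp_notMem_ab K.Q_notMem_ab N.Pp_notMem_ab N.Q_notMem_ab
    K.B_mem_ab K.A_mem_ab K.A_ne_B.symm K.C_ne_B.symm K.C_ne_A.symm hPp hP'p hQq hQ'q hOp hOq
    K.B_mem_BR K.Pp_mem_BR N.B_mem_BR N.Pp_mem_BR h.BR_ne K.A_mem_AR K.Q_mem_AR N.A_mem_AR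
    N.Q_mem_AR h.AR_ne K.R_mem_BR K.R_mem_AR N.R_mem_BR N.R_mem_AR

theorem col_S (hdes : DesarguesProperty P L) (h : K.Generic N) {O : P} {p q : L}
    (hPp : K.Pp ∈ p) (hP'p : N.Pp ∈ p) (hQq : K.Q ∈ q) (hQ'q : N.Q ∈ q) (hOp : O ∈ p)
    (hOq : O ∈ q) : Col P L O K.S N.S :=
  hdes.col_of_two_lines h.l_ne K.C_mem_l N.C_mem_l K.C_mem_ab K.Pp_mem_l K.Q_mem_l N.Pp_mem_l
    N.Q_mem_l K.Pp_ne_Q N.Pp_ne_Q K.Pp_notMem_ab K.Q_notMem_ab N.Pp_notMem_ab N.Q_notMem_ab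
    K.A_mem_ab K.B_mem_ab K.A_ne_B K.C_ne_A.symm K.C_ne_B.symm hPp hP'p hQq hQ'q hOp hOq
    K.A_mem_AP K.Pp_mem_AP N.A_mem_AP N.Pp_mem_AP h.AP_ne K.B_mem_BQ K.Q_mem_BQ N.B_mem_BQ
    N.Q_mem_BQ h.BQ_ne K.S_mem_AP K.S_mem_BQ N.S_mem_AP N.S_mem_BQ

/-- `O` is the center from which `eq_of_generic` sees the triangles `R Q S` and `R' Q' S'`. -/
theorem center_notMem (h : K.Generic N) {O : P} {p q k₁ k₂ : L} (hPp : K.Pp ∈ p) (hP'p : N.Pp ∈ p)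
    (hQq : K.Q ∈ q) (hQ'q : N.Q ∈ q) (hOp : O ∈ p) (hOq : O ∈ q) (hOk₁ : O ∈ k₁)
    (hRk₁ : K.R ∈ k₁) (hR'k₁ : N.R ∈ k₁) (hOk₂ : O ∈ k₂) (hSk₂ : K.S ∈ k₂) (hS'k₂ : N.S ∈ k₂)
    (hRS : K.RS ≠ N.RS) : O ∉ K.AR ∧ O ∉ K.BQ ∧ O ∉ K.RS := by
  have hpl : p ≠ K.l := fun e => h.Pp_notMem_l (mem_of_mem_of_eq hP'p e)
  have hql : q ≠ K.l := fun e => h.Q_notMem_l (mem_of_mem_of_eq hQ'q e)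
  have hOQ : O ≠ K.Q := fun e => K.Pp_ne_Q <|
    (point_unique hpl hOp (mem_of_eq_of_mem e K.Q_mem_l) hPp K.Pp_mem_l).symm.trans e
  have hOR : O ≠ K.R := fun e => h.Pp_notMem_BR <| mem_of_mem_of_eq hP'p <|
    line_unique (fun e' => K.R_notMem_l (mem_of_eq_of_mem e'.symm K.Pp_mem_l)) hPp
      (mem_of_eq_of_mem e.symm hOp) K.Pp_mem_BR K.R_mem_BR
  have hOS : O ≠ K.S := fun e => h.Pp_notMem_AP <| mem_of_mem_of_eq hP'p <|
    line_unique K.S_ne_Pp.symm hPp (mem_of_eq_of_mem e.symm hOp) K.Pp_mem_AP K.S_mem_AP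
  refine ⟨fun hO => hOQ ?_, fun hO => hOQ ?_, fun hO => hRS ?_⟩
  · exact point_unique (fun e => h.Q_notMem_AR (mem_of_mem_of_eq hQ'q e)) hOq hO hQq K.Q_mem_AR
  · exact point_unique (fun e => h.Q_notMem_BQ (mem_of_mem_of_eq hQ'q e)) hOq hO hQq K.Q_mem_BQ
  · have hk₁ : k₁ = K.RS := line_unique hOR hOk₁ hRk₁ hO K.R_mem_RS
    have hk₂ : k₂ = K.RS := line_unique hOS hOk₂ hSk₂ hO K.S_mem_RS
    exact line_unique N.S_ne_R.symm (mem_of_mem_of_eq hR'k₁ hk₁) (mem_of_mem_of_eq hS'k₂ hk₂)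
      N.R_mem_RS N.S_mem_RS

end Generic

/-- Three applications of Desargues's property: `O = p·q` is collinear with `R, R'` and with
`S, S'`, and then the triangles `R Q S` and `R' Q' S'` are perspective from `O`. -/
theorem eq_of_generic [ProjectivePlane P L] (hdes : DesarguesProperty P L)
    {K : HarmonicQuadrangle A B C D ab} {N : HarmonicQuadrangle A B C D' ab} (h : K.Generic N) :
    D = D' := by
  have hPP : K.Pp ≠ N.Pp := fun e => h.Pp_notMem_l (mem_of_eq_of_mem e.symm K.Pp_mem_l)
  have hQQ : K.Q ≠ N.Q := fun e => h.Q_notMem_l (mem_of_eq_of_mem e.symm K.Q_mem_l)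
  obtain ⟨p, hPp, hP'p⟩ : ∃ p : L, K.Pp ∈ p ∧ N.Pp ∈ p := ⟨_, mkLine_ax hPP⟩
  obtain ⟨q, hQq, hQ'q⟩ : ∃ q : L, K.Q ∈ q ∧ N.Q ∈ q := ⟨_, mkLine_ax hQQ⟩
  have hpq : p ≠ q := fun e => h.Pp_notMem_l <| mem_of_mem_of_eq hP'p <|
    line_unique K.Pp_ne_Q hPp (mem_of_mem_of_eq hQq e.symm) K.Pp_mem_l K.Q_mem_l
  obtain ⟨O, hOp, hOq⟩ : ∃ O : P, O ∈ p ∧ O ∈ q := ⟨_, mkPoint_ax hpq⟩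
  obtain ⟨k₁, hOk₁, hRk₁, hR'k₁⟩ := h.col_R hdes hPp hP'p hQq hQ'q hOp hOq
  obtain ⟨k₂, hOk₂, hSk₂, hS'k₂⟩ := h.col_S hdes hPp hP'p hQq hQ'q hOp hOq
  by_cases hRS : K.RS = N.RS
  · exact point_unique K.RS_ne_ab K.D_mem_RS K.D_mem_ab (mem_of_mem_of_eq N.D_mem_RS hRS.symm)
      N.D_mem_ab
  obtain ⟨hOAR, hOBQ, hORS⟩ :=
    h.center_notMem hPp hP'p hQq hQ'q hOp hOq hOk₁ hRk₁ hR'k₁ hOk₂ hSk₂ hS'k₂ hRS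
  obtain ⟨hOAR', hOBQ', hORS'⟩ :=
    h.symm.center_notMem hP'p hPp hQ'q hQq hOp hOq hOk₁ hR'k₁ hRk₁ hOk₂ hS'k₂ hSk₂ (Ne.symm hRS)
  have hRR : K.R ≠ N.R := fun e => h.BR_ne <|
    line_unique K.R_ne_B.symm K.B_mem_BR K.R_mem_BR N.B_mem_BR (mem_of_eq_of_mem e N.R_mem_BR)
  have hSS : K.S ≠ N.S := fun e => h.AP_ne <|
    line_unique K.S_ne_A.symm K.A_mem_AP K.S_mem_AP N.A_mem_AP (mem_of_eq_of_mem e N.S_mem_AP)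
  obtain ⟨hX, hX'⟩ := mkPoint_ax (P := P) hRS
  obtain ⟨k, hAk, hBk, hXk⟩ := hdes.col K.isTriangle N.isTriangle hRR hQQ hSS
    ⟨⟨k₁, hRk₁, hR'k₁, hOk₁⟩, ⟨q, hQq, hQ'q, hOq⟩, ⟨k₂, hSk₂, hS'k₂, hOk₂⟩, hOAR, hOBQ, hORS,
      hOAR', hOBQ', hORS'⟩ K.A_mem_AR N.A_mem_AR K.B_mem_BQ N.B_mem_BQ hX hX'
  have hXab := mem_of_mem_of_eq hXk (line_unique K.A_ne_B hAk hBk K.A_mem_ab K.B_mem_ab)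
  exact (point_unique K.RS_ne_ab hX hXab K.D_mem_RS K.D_mem_ab).symm.trans
    (point_unique N.RS_ne_ab hX' hXab N.D_mem_RS N.D_mem_ab)

end HarmonicQuadrangle

end Invariance

section Uniqueness

variable [ProjectivePlane P L]

namespace HarmonicQuadrangle

variable {A B C D D' : P} {ab : L}

/-- The quadrangle is determined by `l`, `Pp` and `Q`, with `R = BPp·AQ`. -/
theorem exists_of_l_Pp_Q {l : L} {Pp Q : P} (hAB : A ≠ B) (hCA : C ≠ A) (hCB : C ≠ B)
    (hA : A ∈ ab) (hB : B ∈ ab) (hC : C ∈ ab) (hCl : C ∈ l) (hlab : l ≠ ab) (hPl : Pp ∈ l)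
    (hQl : Q ∈ l) (hPab : Pp ∉ ab) (hQab : Q ∉ ab) (hPQ : Pp ≠ Q) :
    ∃ (D : P) (N : HarmonicQuadrangle A B C D ab), N.l = l ∧ N.Pp = Pp ∧ N.Q = Q := by
  have hBl : B ∉ l := fun h => hlab (line_unique hCB.symm h hCl hB hC)
  have hAl : A ∉ l := fun h => hlab (line_unique hCA.symm h hCl hA hC)
  have hBP : B ≠ Pp := fun h => hPab (h ▸ hB)
  have hAQ : A ≠ Q := fun h => hQab (h ▸ hA)
  obtain ⟨g, hBg, hPg⟩ : ∃ g : L, B ∈ g ∧ Pp ∈ g := ⟨_, mkLine_ax hBP⟩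
  obtain ⟨g', hAg', hQg'⟩ : ∃ g' : L, A ∈ g' ∧ Q ∈ g' := ⟨_, mkLine_ax hAQ⟩
  have hgab : g ≠ ab := fun h => hPab (h ▸ hPg)
  have hg'ab : g' ≠ ab := fun h => hQab (h ▸ hQg')
  have hgl : g ≠ l := fun h => hBl (h ▸ hBg)
  have hg'l : g' ≠ l := fun h => hAl (h ▸ hAg')
  have hgg' : g ≠ g' := fun h => hgab (line_unique hAB (h ▸ hAg') hBg hA hB)
  obtain ⟨R, hRg, hRg'⟩ : ∃ R : P, R ∈ g ∧ R ∈ g' := ⟨_, mkPoint_ax hgg'⟩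
  have hRab : R ∉ ab := fun h =>
    hAB ((point_unique hg'ab hAg' hA hRg' h).trans (point_unique hgab hRg h hBg hB))
  have hRl : R ∉ l := fun h =>
    hPQ ((point_unique hgl hPg hPl hRg h).trans (point_unique hg'l hRg' h hQg' hQl))
  obtain ⟨D, N, rfl, rfl⟩ :=
    exists_of_l_R hAB hCA hCB hA hB hC hCl hlab hRab hRl
  have hBR : B ≠ N.R := fun h => hRab (h ▸ hB)
  have hAR : A ≠ N.R := fun h => hRab (h ▸ hA)
  have hNBR : N.BR = g := line_unique hBR N.B_mem_BR N.R_mem_BR hBg hRg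
  have hNAR : N.AR = g' := line_unique hAR N.A_mem_AR N.R_mem_AR hAg' hRg'
  exact ⟨D, N, rfl, point_unique hgl (hNBR ▸ N.Pp_mem_BR) N.Pp_mem_l hPg hPl,
    point_unique hg'l (hNAR ▸ N.Q_mem_AR) N.Q_mem_l hQg' hQl⟩

/-- With eight points on the new line `l` there is room to choose `Pp` off five lines and then
`Q` off six. -/
theorem exists_generic (h8 : LinesHaveAtLeast P L 8) (K : HarmonicQuadrangle A B C D ab)
    (K' : HarmonicQuadrangle A B C D' ab) :
    ∃ (D'' : P) (N : HarmonicQuadrangle A B C D'' ab), K.Generic N ∧ K'.Generic N := by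
  obtain ⟨l, hCl, hl⟩ := h8.exists_line_forall_notMem (X := C) (U := [A, K.Pp, K'.Pp])
    (by simp [K.C_ne_A.symm, K.Pp_ne_C, K'.Pp_ne_C]) (by simp)
  have hAl : A ∉ l := hl A (by simp)
  have hKl : K.l ≠ l := fun e => hl K.Pp (by simp) (mem_of_mem_of_eq K.Pp_mem_l e)
  have hK'l : K'.l ≠ l := fun e => hl K'.Pp (by simp) (mem_of_mem_of_eq K'.Pp_mem_l e)
  have hlab : l ≠ ab := fun e => hAl (mem_of_mem_of_eq K.A_mem_ab e.symm)
  have hBl : B ∉ l := fun h => hlab (line_unique K.C_ne_B.symm h hCl K.B_mem_ab K.C_mem_ab)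
  have hA : ∀ t : L, A ∈ t → t ≠ l := fun t ht e => hAl (e ▸ ht)
  have hB : ∀ t : L, B ∈ t → t ≠ l := fun t ht e => hBl (e ▸ ht)
  obtain ⟨Pp, hPl, hPp⟩ := h8.exists_mem_forall_notMem (g := l)
    (T := [ab, K.AP, K'.AP, K.BR, K'.BR])
    (by simp [hA _ K.A_mem_ab, hA _ K.A_mem_AP, hA _ K'.A_mem_AP, hB _ K.B_mem_BR,
      hB _ K'.B_mem_BR]) (by simp)
  have hBP : B ≠ Pp := fun h => hPp ab (by simp) (h ▸ K.B_mem_ab)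
  obtain ⟨g, hBg, hPg⟩ : ∃ g : L, B ∈ g ∧ Pp ∈ g := ⟨_, mkLine_ax hBP⟩
  obtain ⟨Q, hQl, hQ⟩ := h8.exists_mem_forall_notMem (g := l)
    (T := [ab, K.BQ, K'.BQ, K.AR, K'.AR, g])
    (by simp [hA _ K.A_mem_ab, hB _ K.B_mem_BQ, hB _ K'.B_mem_BQ, hA _ K.A_mem_AR,
      hA _ K'.A_mem_AR, hB _ hBg]) (by simp)
  obtain ⟨D'', N, rfl, rfl, rfl⟩ := exists_of_l_Pp_Q K.A_ne_B K.C_ne_A K.C_ne_B K.A_mem_ab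
    K.B_mem_ab K.C_mem_ab hCl hlab hPl hQl (hPp ab (by simp)) (hQ ab (by simp))
    (fun e => hQ g (by simp) (e ▸ hPg))
  exact ⟨D'', N,
    .of_notMem hKl (hPp _ (by simp)) (hQ _ (by simp)) (hPp _ (by simp)) (hQ _ (by simp)),
    .of_notMem hK'l (hPp _ (by simp)) (hQ _ (by simp)) (hPp _ (by simp)) (hQ _ (by simp))⟩

theorem _root_.IsHarmonic.unique (hdes : DesarguesProperty P L) (h8 : LinesHaveAtLeast P L 8)
    {A B C D D' : P} (hCA : C ≠ A) (hCB : C ≠ B) (h : IsHarmonic P L A B C D)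
    (h' : IsHarmonic P L A B C D') : D = D' := by
  obtain ⟨hA, hB⟩ := mkLine_ax (L := L) h.1
  obtain ⟨K⟩ := h.nonempty_harmonicQuadrangle hCA hCB hA hB
  obtain ⟨K'⟩ := h'.nonempty_harmonicQuadrangle hCA hCB hA hB
  obtain ⟨D'', N, hKN, hK'N⟩ := exists_generic h8 K K'
  exact (eq_of_generic hdes hKN).trans (eq_of_generic hdes hK'N).symm

end HarmonicQuadrangle

end Uniqueness

section Degenerate

namespace IsHarmonic

variable {A B C D : P}

theorem swap (h : IsHarmonic P L A B C D) : IsHarmonic P L B A C D := by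
  obtain ⟨hAB, ab, l, R, Pp, Q, S, hA, hB, hC, hCl, hlab, hRab, hRl, hPl, hBRP, hQl, hARQ, hAPS,
    hBQS, hD, hRSD⟩ := h
  exact ⟨hAB.symm, ab, l, R, Q, Pp, S, hB, hA, hC, hCl, hlab, hRab, hRl, hQl, hARQ, hPl, hBRP,
    hBQS, hAPS, hD, hRSD⟩

/-- For `C = A` the construction collapses: `Q = A`, hence `S = A` and `D = A`. -/
theorem eq_of_left [Nondegenerate P L] (h : IsHarmonic P L A B A D) : D = A := by
  obtain ⟨hAB, ab, l, R, Pp, Q, S, hA, hB, -, hAl, hlab, hRab, hRl, hPl, ⟨BR, hB₁, hR₁, hP₁⟩, hQl,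
    ⟨AR, hA₂, hR₂, hQ₂⟩, ⟨AP, hA₃, hP₃, hS₃⟩, ⟨BQ, hB₄, hQ₄, hS₄⟩, hD, ⟨RS, hR₅, hS₅, hD₅⟩⟩ := h
  have hARl : AR ≠ l := fun e => hRl (e ▸ hR₂)
  have hRSab : RS ≠ ab := fun e => hRab (e ▸ hR₅)
  have hQA : Q = A := point_unique hARl hQ₂ hQl hA₂ hAl
  have hBQ : BQ = ab := line_unique hAB (hQA ▸ hQ₄) hB₄ hA hB
  have hAPab : AP ≠ ab := fun e => hRab <|
    line_unique hAB (point_unique hlab hAl hA hPl (e ▸ hP₃) ▸ hP₁) hB₁ hA hB ▸ hR₁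
  have hSA : S = A := point_unique hAPab hS₃ (hBQ ▸ hS₄) hA₃ hA
  exact point_unique hRSab hD₅ hD (hSA ▸ hS₅) hA

theorem eq_of_right [Nondegenerate P L] (h : IsHarmonic P L A B B D) : D = B :=
  h.swap.eq_of_left

theorem self [ProjectivePlane P L] (h8 : LinesHaveAtLeast P L 8) (hAB : A ≠ B) :
    IsHarmonic P L A B A A := by
  obtain ⟨ab, hA, hB⟩ : ∃ ab : L, A ∈ ab ∧ B ∈ ab := ⟨_, mkLine_ax hAB⟩
  obtain ⟨l, hAl, hl⟩ := h8.exists_line_forall_notMem (X := A) (U := [B]) (by simp [hAB.symm])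
    (by simp)
  have hlab : l ≠ ab := fun e => hl B (by simp) (e ▸ hB)
  obtain ⟨k, hAk⟩ := Nondegenerate.exists_line (L := L) A
  have habk : ab ≠ k := fun e => hAk (e ▸ hA)
  have hlk : l ≠ k := fun e => hAk (e ▸ hAl)
  obtain ⟨R, -, hR⟩ := h8.exists_mem_forall_notMem (g := k) (T := [ab, l]) (by simp [habk, hlk])
    (by simp)
  have hRab : R ∉ ab := hR ab (by simp)
  have hRl : R ∉ l := hR l (by simp)
  have hBR : B ≠ R := fun e => hRab (e ▸ hB)
  have hAR : A ≠ R := fun e => hRab (e ▸ hA)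
  obtain ⟨BR, hB₁, hR₁⟩ : ∃ BR : L, B ∈ BR ∧ R ∈ BR := ⟨_, mkLine_ax hBR⟩
  obtain ⟨AR, hA₂, hR₂⟩ : ∃ AR : L, A ∈ AR ∧ R ∈ AR := ⟨_, mkLine_ax hAR⟩
  have hBRl : BR ≠ l := fun e => hRl (e ▸ hR₁)
  obtain ⟨Pp, hP₁, hPl⟩ : ∃ Pp : P, Pp ∈ BR ∧ Pp ∈ l := ⟨_, mkPoint_ax hBRl⟩
  have hAP : A ≠ Pp := fun e => hRab (line_unique hAB (e ▸ hP₁) hB₁ hA hB ▸ hR₁)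
  obtain ⟨AP, hA₃, hP₃⟩ : ∃ AP : L, A ∈ AP ∧ Pp ∈ AP := ⟨_, mkLine_ax hAP⟩
  exact ⟨hAB, ab, l, R, Pp, A, A, hA, hB, hA, hAl, hlab, hRab, hRl, hPl, ⟨BR, hB₁, hR₁, hP₁⟩, hAl,
    ⟨AR, hA₂, hR₂, hA₂⟩, ⟨AP, hA₃, hP₃, hA₃⟩, ⟨ab, hB, hA, hA⟩, hA, ⟨AR, hR₂, hA₂, hA₂⟩⟩

end IsHarmonic

end Degenerate

section Pencils

variable [ProjectivePlane P L]

namespace IsHarmonic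

/-- Choosing the quadrangle with `R = O`, the quadrilateral `ab, l, AP, BQ` witnesses that the
lines `OA, OB, OC, OD` are harmonic in the dual plane. -/
theorem dual_pencil (hdes : DesarguesProperty P L) (h8 : LinesHaveAtLeast P L 8)
    {A B C D O : P} {ab a b c d : L} (h : IsHarmonic P L A B C D) (hCA : C ≠ A) (hCB : C ≠ B)
    (hA : A ∈ ab) (hB : B ∈ ab) (hC : C ∈ ab) (hD : D ∈ ab) (hOab : O ∉ ab) (hOa : O ∈ a)
    (hAa : A ∈ a) (hOb : O ∈ b) (hBb : B ∈ b) (hOc : O ∈ c) (hCc : C ∈ c) (hOd : O ∈ d)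
    (hDd : D ∈ d) : IsHarmonic (Dual L) (Dual P) a b c d := by
  have hOC : O ≠ C := fun e => hOab (e ▸ hC)
  obtain ⟨l, hCl, hl⟩ := h8.exists_line_forall_notMem (X := C) (U := [A, O])
    (by simp [hCA.symm, hOC]) (by simp)
  have hlab : l ≠ ab := fun e => hl A (by simp) (e ▸ hA)
  obtain ⟨D₀, K, rfl, rfl⟩ :=
    HarmonicQuadrangle.exists_of_l_R h.1 hCA hCB hA hB hC hCl hlab hOab (hl _ (by simp))
  obtain rfl : D₀ = D := IsHarmonic.unique hdes h8 hCA hCB K.isHarmonic h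
  have hBR : K.BR = b := line_unique K.R_ne_B K.R_mem_BR K.B_mem_BR hOb hBb
  have hAR : K.AR = a := line_unique K.R_ne_A K.R_mem_AR K.A_mem_AR hOa hAa
  have hRS : K.RS = d := line_unique (fun e => hOab (mem_of_eq_of_mem e hD)) K.R_mem_RS K.D_mem_RS
    hOd hDd
  have hab : a ≠ b := fun e => hOab (line_unique h.1 hAa (e ▸ hBb) hA hB ▸ hOa)
  exact ⟨hab, K.R, C, K.AP, K.l, ab, K.BQ, hOa, hOb, hOc, hCc, hOC.symm, K.R_notMem_AP,
    K.C_notMem_AP, K.C_mem_l, ⟨K.Pp, hBR ▸ K.Pp_mem_BR, K.Pp_mem_AP, K.Pp_mem_l⟩, hC,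
    ⟨A, hAa, K.A_mem_AP, hA⟩, ⟨K.Q, hAR ▸ K.Q_mem_AR, K.Q_mem_l, K.Q_mem_BQ⟩,
    ⟨B, hBb, hB, K.B_mem_BQ⟩, hOd, ⟨K.S, K.S_mem_AP, K.S_mem_BQ, hRS ▸ K.S_mem_RS⟩⟩

theorem of_dual_pencil (hdes : DesarguesProperty P L) (h8 : LinesHaveAtLeast P L 8)
    {a b c d m : L} {O A B C D : P} (h : IsHarmonic (Dual L) (Dual P) a b c d) (hca : c ≠ a)
    (hcb : c ≠ b) (hOa : O ∈ a) (hOb : O ∈ b) (hOc : O ∈ c) (hOd : O ∈ d) (hOm : O ∉ m)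
    (hAm : A ∈ m) (hAa : A ∈ a) (hBm : B ∈ m) (hBb : B ∈ b) (hCm : C ∈ m) (hCc : C ∈ c)
    (hDm : D ∈ m) (hDd : D ∈ d) : IsHarmonic P L A B C D :=
  dual_pencil (P := Dual L) (L := Dual P) hdes.dual h8.dual h hca hcb hOa hOb hOc hOd hOm hAm hAa
    hBm hBb hCm hCc hDm hDd

end IsHarmonic

end Pencils

section Projectivities

theorem IsPerspectivity.injective [Nondegenerate P L] {l m : L} {f : Rng P L l → Rng P L m}
    (hf : IsPerspectivity P L l m f) : Function.Injective f := by
  obtain ⟨O, hOl, hOm, hk⟩ := hf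
  intro X Y hXY
  by_contra hne
  obtain ⟨kX, hOX, hXX, hfX⟩ := hk X
  obtain ⟨kY, hOY, hYY, hfY⟩ := hk Y
  have hOf : O ≠ f X := fun e => hOm (e ▸ (f X).2)
  have hXY' : kX = kY := line_unique hOf hOX hfX hOY (hXY ▸ hfY)
  exact hOl (line_unique (fun e => hne (Subtype.ext e)) hXX (hXY' ▸ hYY) X.2 Y.2 ▸ hOX)

theorem IsPerspectivity.isHarmonic_map [ProjectivePlane P L] (hdes : DesarguesProperty P L)
    (h8 : LinesHaveAtLeast P L 8) {l m : L} {f : Rng P L l → Rng P L m}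
    (hf : IsPerspectivity P L l m f) {A B C D : Rng P L l} (h : IsHarmonic P L A B C D) : IsHarmonic P L (f A) (f B) (f C) (f D) := by
  have hfAB : (f A : P) ≠ f B := fun e => h.1 (congrArg Subtype.val (hf.injective (Subtype.ext e)))
  by_cases hCA : (C : P) = A
  · obtain rfl := Subtype.ext hCA
    obtain rfl := Subtype.ext (hCA ▸ h).eq_of_left
    exact IsHarmonic.self h8 hfAB
  by_cases hCB : (C : P) = B
  · obtain rfl := Subtype.ext hCB
    obtain rfl := Subtype.ext (hCB ▸ h).eq_of_right
    exact (IsHarmonic.self h8 hfAB.symm).swap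
  obtain ⟨O, hOl, hOm, hk⟩ := hf
  obtain ⟨a, hOa, hAa, hfAa⟩ := hk A
  obtain ⟨b, hOb, hBb, hfBb⟩ := hk B
  obtain ⟨c, hOc, hCc, hfCc⟩ := hk C
  obtain ⟨d, hOd, hDd, hfDd⟩ := hk D
  have hca : c ≠ a := fun e => hOl (line_unique hCA (e ▸ hCc) hAa C.2 A.2 ▸ hOa)
  have hcb : c ≠ b := fun e => hOl (line_unique hCB (e ▸ hCc) hBb C.2 B.2 ▸ hOb)
  exact (h.dual_pencil hdes h8 hCA hCB A.2 B.2 C.2 D.2 hOl hOa hAa hOb hBb hOc hCc hOd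
    hDd).of_dual_pencil hdes h8 hca hcb hOa hOb hOc hOd hOm (f A).2 hfAa (f B).2 hfBb (f C).2
    hfCc (f D).2 hfDd

theorem IsProjectivity.isHarmonic_map [ProjectivePlane P L] (hdes : DesarguesProperty P L)
    (h8 : LinesHaveAtLeast P L 8) {l m : L} {f : Rng P L l → Rng P L m}
    (hf : IsProjectivity P L l m f) {A B C D : Rng P L l} (h : IsHarmonic P L A B C D) : IsHarmonic P L (f A) (f B) (f C) (f D) := by
  induction hf with
  | persp hp => exact hp.isHarmonic_map hdes h8 h
  | comp _ _ ihf ihg => exact ihg (ihf h)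

end Projectivities

end

theorem projectivity_preserves_harmonic
    [Configuration.ProjectivePlane P L]
    (hdes : DesarguesProperty P L)
    (h8 : LinesHaveAtLeast P L 8)
    (A B : P) (ab : L) (hA : A ∈ ab) (hB : B ∈ ab)
    (C : P) (hC : C ∈ ab)
    (m : L) (f : Rng P L ab → Rng P L m)
    (hproj : IsProjectivity P L ab m f)
    (D : P) (hD : D ∈ ab) (hharm : IsHarmonic P L A B C D) :
    IsHarmonic P L ((f ⟨A, hA⟩ : P)) ((f ⟨B, hB⟩ : P)) ((f ⟨C, hC⟩ : P)) ((f ⟨D, hD⟩ : P)) :=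
  hproj.isHarmonic_map hdes h8 hharm
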